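/- There exist constants c > 0 and n₀ such that for every integer n ≥ n₀ divisible by 4, the (1+1)-ENAS algorithm with multi-bit mutation and initial bound s = n/4 has expected runtime E[T] ≥ c·n on the UNIFORM problem (the paper's proof gives E[T] ≥ n/5). -/

import Mathlib

/-!
Runtime analysis of the (1+1)-ENAS algorithm on the UNIFORM problem.

A neural architecture is a triple `x = (n_A, n_B, n_C) ∈ ℕ³`.  With `a = n/2`,
`b = c = n/4`, `A = (1/2)·sin(2π/n)`, `B = π/n − A`, the fitness is
`f(x) = (1/π)·((n/2 + i(x))·A + (n/4 + j(x))·B)` where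
`i(x) = min(n_B, b) + min(n_C, c)` and
`j(x) = min(n_A, a) + min(n_B, b) − max(0, min(n_B − b, c − n_C))` (in ℤ).

One-bit mutation chooses uniformly among nine actions (three increments with
probability 1/9 each, three guarded decrements with probability 1/9 each and
six guarded modifications with probability 1/18 each); we realize this as the
push-forward of the uniform distribution on `Fin 18`.

The (1+1)-ENAS Markov chain starts from a state whose coordinates are
independent uniform on `{0,…,s}` and repeatedly applies mutation followed by
elitist selection.  The expected runtime `E[T]`, where `T` is the first `t`
with `f(x_t) = 1`, is expressed as `∑_{t≥0} P(T > t)`, where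
`P(T > t) = ∑_x alive t x` and `alive t x` is the probability that the chain
is in state `x` at time `t` without having reached fitness `1` at any time
`u ≤ t`.
-/

namespace ENAS

open scoped ENNReal

/-- A neural architecture: the numbers of A-, B- and C-type blocks. -/
abbrev State := ℕ × ℕ × ℕ

/-- The number of B/C-type blocks contributing to the fitness. -/
def iVal (n : ℕ) (x : State) : ℕ := min x.2.1 (n / 4) + min x.2.2 (n / 4)

/-- The number of A/B-type blocks contributing to the fitness minus the number of
B-type blocks negatively affecting the fitness (evaluated in `ℤ`). -/
def jVal (n : ℕ) (x : State) : ℤ :=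
  min (x.1 : ℤ) ((n : ℤ) / 2) + min (x.2.1 : ℤ) ((n : ℤ) / 4) -
    max 0 (min ((x.2.1 : ℤ) - (n : ℤ) / 4) ((n : ℤ) / 4 - (x.2.2 : ℤ)))

/-- The fitness (classification accuracy) of an architecture on `UNIFORM`. -/
noncomputable def fitness (n : ℕ) (x : State) : ℝ :=
  (1 / Real.pi) *
    (((n : ℝ) / 2 + (iVal n x : ℝ)) * ((1 / 2) * Real.sin (2 * Real.pi / n)) +
      ((n : ℝ) / 4 + (jVal n x : ℝ)) *
        (Real.pi / n - (1 / 2) * Real.sin (2 * Real.pi / n)))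

/-- The elementary mutation actions.  Seeds `0`–`11` (two seeds per action) give the
six probability-`1/9` actions (add A/B/C, remove A/B/C, where removal of an absent
block leaves the state unchanged, as does truncated subtraction on `ℕ`); seeds
`12`–`17` give the six probability-`1/18` modification actions. -/
def applyAction (k : Fin 18) (x : State) : State :=
  match (k : ℕ), x with
  | 0, (na, nb, nc) => (na + 1, nb, nc)
  | 1, (na, nb, nc) => (na + 1, nb, nc)
  | 2, (na, nb, nc) => (na, nb + 1, nc)
  | 3, (na, nb, nc) => (na, nb + 1, nc)
  | 4, (na, nb, nc) => (na, nb, nc + 1)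
  | 5, (na, nb, nc) => (na, nb, nc + 1)
  | 6, (na, nb, nc) => (na - 1, nb, nc)
  | 7, (na, nb, nc) => (na - 1, nb, nc)
  | 8, (na, nb, nc) => (na, nb - 1, nc)
  | 9, (na, nb, nc) => (na, nb - 1, nc)
  | 10, (na, nb, nc) => (na, nb, nc - 1)
  | 11, (na, nb, nc) => (na, nb, nc - 1)
  | 12, (na, nb, nc) => if 0 < na then (na - 1, nb + 1, nc) else (na, nb, nc)
  | 13, (na, nb, nc) => if 0 < na then (na - 1, nb, nc + 1) else (na, nb, nc)
  | 14, (na, nb, nc) => if 0 < nb then (na + 1, nb - 1, nc) else (na, nb, nc)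
  | 15, (na, nb, nc) => if 0 < nb then (na, nb - 1, nc + 1) else (na, nb, nc)
  | 16, (na, nb, nc) => if 0 < nc then (na + 1, nb, nc - 1) else (na, nb, nc)
  | _, (na, nb, nc) => if 0 < nc then (na, nb + 1, nc - 1) else (na, nb, nc)

/-- The one-bit mutation operator, as a probability distribution on offspring. -/
noncomputable def mutate (x : State) : PMF State :=
  (PMF.uniformOfFintype (Fin 18)).map (fun k => applyAction k x)

/-- Elitist selection: keep the offspring `y` iff `f(y) ≥ f(x)`. -/
noncomputable def select (n : ℕ) (x y : State) : State :=
  if fitness n x ≤ fitness n y then y else x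

/-- One generation of the (1+1)-ENAS algorithm with one-bit mutation. -/
noncomputable def stepOneBit (n : ℕ) (x : State) : PMF State :=
  (mutate x).map (select n x)

/-- The initial distribution: the three coordinates are independent, each uniform on
`{0, 1, …, s}`. -/
noncomputable def initDist (s : ℕ) : PMF State :=
  (PMF.uniformOfFintype (Fin (s + 1) × Fin (s + 1) × Fin (s + 1))).map
    (fun q => ((q.1 : ℕ), (q.2.1 : ℕ), (q.2.2 : ℕ)))

/-- `alive n step μ0 t x` is the probability that the chain with initial distribution
`μ0` and transition kernel `step` is in state `x` at time `t` and has not reached a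
state of fitness `1` at any time `u ≤ t`; so `∑' x, alive n step μ0 t x = P(T > t)`
where `T` is the first hitting time of `{f = 1}`. -/
noncomputable def alive (n : ℕ) (step : State → PMF State) (μ0 : PMF State) :
    ℕ → State → ℝ≥0∞
  | 0, x => if fitness n x = 1 then 0 else μ0 x
  | t + 1, x => if fitness n x = 1 then 0 else ∑' y, alive n step μ0 t y * step y x

/-- The expected runtime `E[T] = ∑_{t ≥ 0} P(T > t)` of the algorithm, where `T` is
the first `t ≥ 0` with `f(x_t) = 1`. -/
noncomputable def expectedRuntime (n : ℕ) (step : State → PMF State) (μ0 : PMF State) :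
    ℝ≥0∞ :=
  ∑' t : ℕ, ∑' x : State, alive n step μ0 t x


/-- Applying the elementary (one-bit) mutation operation `k` consecutive times,
each application independently selecting its action. -/
noncomputable def mutateIter : ℕ → State → PMF State
  | 0, x => PMF.pure x
  | k + 1, x => (mutate x).bind (mutateIter k)

/-- Multi-bit mutation: apply the elementary mutation `K` consecutive times, where
`K − 1` is Poisson-distributed with mean `1`, independently of everything else. -/
noncomputable def mutateMulti (x : State) : PMF State :=
  (ProbabilityTheory.poissonPMF 1).bind fun k => mutateIter (k + 1) x

/-- One generation of the (1+1)-ENAS algorithm with multi-bit mutation. -/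
noncomputable def stepMultiBit (n : ℕ) (x : State) : PMF State :=
  (mutateMulti x).map (select n x)

end ENAS

/-!
Measure progress by the potential `φ(x) = min(n/4, n/2 - n_A)`. A state of fitness `1` has
`n_A ≥ n/2`, so `φ` vanishes there, while every initial state has `φ = n/4`. An elementary
mutation adds at most one A-block and selection can only keep the parent instead, so one
generation lowers `φ` by at most `K`, whose mean is `2`. By additive drift
`E[φ(x_t); T > t] ≥ n/4 - 2t`, and as `φ ≤ n/4` this gives `P(T > t) ≥ 1/2` for `4t ≤ n/4`;
summing `E[T] = ∑ P(T > t)` over these `t` yields `E[T] ≥ n/32`.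
-/

namespace PMF

open scoped ENNReal

variable {α β : Type*}

theorem tsum_bind_mul (p : PMF α) (q : α → PMF β) (f : β → ℝ≥0∞) :
    ∑' y, p.bind q y * f y = ∑' x, p x * ∑' y, q x y * f y := by
  simp_rw [bind_apply, ← ENNReal.tsum_mul_right, ← ENNReal.tsum_mul_left, mul_assoc]
  exact ENNReal.tsum_comm

theorem tsum_map_mul (p : PMF α) (g : α → β) (f : β → ℝ≥0∞) :
    ∑' y, p.map g y * f y = ∑' x, p x * f (g x) := by
  rw [map, tsum_bind_mul]
  simp [pure_apply, ite_mul]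

theorem le_tsum_mul_of_forall_mem_support (p : PMF α) {a : ℝ≥0∞} {f : α → ℝ≥0∞}
    (h : ∀ x ∈ p.support, a ≤ f x) : a ≤ ∑' x, p x * f x := by
  calc a = ∑' x, p x * a := by rw [ENNReal.tsum_mul_right, p.tsum_coe, one_mul]
    _ ≤ ∑' x, p x * f x := ENNReal.tsum_le_tsum fun x => by
        by_cases hx : p x = 0
        · simp [hx]
        · exact mul_le_mul_right (h x hx) _

theorem tsum_mul_add_const (p : PMF α) (f : α → ℝ≥0∞) (c : ℝ≥0∞) :
    ∑' x, p x * (f x + c) = ∑' x, p x * f x + c := by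
  simp_rw [mul_add, ENNReal.tsum_add, ENNReal.tsum_mul_right, p.tsum_coe, one_mul]

end PMF

namespace ProbabilityTheory

open scoped ENNReal

set_option linter.deprecated false

theorem poissonPMF_one_succ_mul (k : ℕ) :
    poissonPMF 1 (k + 1) * (k + 1 : ℕ) = poissonPMF 1 k := by
  simp only [← poissonPMFReal_ofReal_eq_poissonPMF, poissonPMFReal, NNReal.coe_one, one_pow,
    ← ENNReal.ofReal_natCast]
  rw [← ENNReal.ofReal_mul (by positivity), Nat.factorial_succ, Nat.cast_mul]
  congr 1
  field_simp

theorem tsum_poissonPMF_one_mul_add_one :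
    ∑' k : ℕ, poissonPMF 1 k * ((k : ℝ≥0∞) + 1) = 2 := by
  have mean : ∑' k : ℕ, poissonPMF 1 k * k = 1 := by
    rw [tsum_eq_zero_add' ENNReal.summable]
    simp only [Nat.cast_zero, mul_zero, zero_add, poissonPMF_one_succ_mul]
    exact (poissonPMF 1).tsum_coe
  rw [(poissonPMF 1).tsum_mul_add_const, mean, one_add_one_eq_two]

end ProbabilityTheory

namespace ENAS

open scoped ENNReal

section Fitness

variable {n : ℕ}

theorem iVal_le (x : State) : iVal n x ≤ 2 * (n / 4) := by
  unfold iVal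
  omega

theorem jVal_le (x : State) : jVal n x ≤ (n : ℤ) / 2 + (n : ℤ) / 4 := by
  unfold jVal
  omega

/-- With `A = sin(2π/n)/2 ≥ 0` and `B = π/n - A > 0` we have `π = n (A + B)`, so the fitness
falls short of `1` by `((n/2 - i) A + (3n/4 - j) B) / π`; both terms are nonnegative. -/
theorem jVal_eq_of_fitness_eq_one (hn : 0 < n) (h4 : 4 ∣ n) {x : State}
    (h : fitness n x = 1) : jVal n x = (n : ℤ) / 2 + (n : ℤ) / 4 := by
  obtain ⟨m, rfl⟩ := h4
  have hm : (1 : ℝ) ≤ m := by exact_mod_cast (by omega : 1 ≤ m)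
  unfold fitness at h
  set θ := 2 * Real.pi / ((4 * m : ℕ) : ℝ)
  have hπ : Real.pi = 2 * m * θ := by simp only [θ]; push_cast; field_simp; norm_num
  have hθ : 0 < θ := by positivity
  have hθπ : θ ≤ Real.pi := by nlinarith
  have hA : 0 ≤ Real.sin θ := Real.sin_nonneg_of_nonneg_of_le_pi hθ.le hθπ
  have hB : 0 < θ - Real.sin θ := sub_pos.mpr (Real.sin_lt hθ)
  have hi : (iVal (4 * m) x : ℝ) ≤ 2 * m := by
    exact_mod_cast (iVal_le x).trans (by omega)
  have hj : (jVal (4 * m) x : ℝ) ≤ 3 * m := by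
    exact_mod_cast (jVal_le x).trans (by push_cast; omega)
  have hfit : (2 * m + iVal (4 * m) x) * Real.sin θ + (m + jVal (4 * m) x) * (θ - Real.sin θ)
      = 4 * m * θ := by
    have hπθ : Real.pi / ((4 * m : ℕ) : ℝ) = θ / 2 := by simp only [θ]; ring
    rw [div_mul_eq_mul_div, one_mul, div_eq_one_iff_eq Real.pi_ne_zero, hπθ] at h
    push_cast at h
    linear_combination 2 * h + 2 * hπ
  have : (3 * m : ℝ) ≤ jVal (4 * m) x := by
    by_contra! hlt
    nlinarith [mul_nonneg (by linarith : (0 : ℝ) ≤ 2 * m - iVal (4 * m) x) hA,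
      mul_pos (by linarith : (0 : ℝ) < 3 * m - jVal (4 * m) x) hB]
  have : (3 * m : ℤ) ≤ jVal (4 * m) x := by exact_mod_cast this
  have := jVal_le (n := 4 * m) x
  push_cast at this ⊢
  omega

theorem half_le_fst_of_fitness_eq_one (hn : 0 < n) (h4 : 4 ∣ n) {x : State}
    (h : fitness n x = 1) : n / 2 ≤ x.1 := by
  have hj := jVal_eq_of_fitness_eq_one hn h4 h
  unfold jVal at hj
  omega

end Fitness

def potential (n : ℕ) (x : State) : ℕ := min (n / 4) (n / 2 - x.1)

theorem potential_eq_zero_of_fitness_eq_one {n : ℕ} (hn : 0 < n) (h4 : 4 ∣ n) {x : State}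
    (h : fitness n x = 1) : potential n x = 0 := by
  have := half_le_fst_of_fitness_eq_one hn h4 h
  unfold potential
  omega

theorem potential_eq_of_mem_support_initDist {n : ℕ} {x : State}
    (hx : x ∈ (initDist (n / 4)).support) : potential n x = n / 4 := by
  rw [initDist, PMF.mem_support_map_iff] at hx
  obtain ⟨q, -, rfl⟩ := hx
  have := q.1.isLt
  unfold potential
  omega

theorem fst_applyAction_le (k : Fin 18) (x : State) : (applyAction k x).1 ≤ x.1 + 1 := by
  obtain ⟨na, nb, nc⟩ := x
  fin_cases k <;> simp only [applyAction] <;> (try split_ifs) <;> omega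

theorem fst_le_of_mem_support_mutateIter {k : ℕ} {x z : State}
    (hz : z ∈ (mutateIter k x).support) : z.1 ≤ x.1 + k := by
  induction k generalizing x with
  | zero =>
    rw [mutateIter, PMF.support_pure, Set.mem_singleton_iff] at hz
    simp [hz]
  | succ k ih =>
    rw [mutateIter, PMF.mem_support_bind_iff] at hz
    obtain ⟨w, hw, hzw⟩ := hz
    rw [mutate, PMF.mem_support_map_iff] at hw
    obtain ⟨a, -, rfl⟩ := hw
    have := fst_applyAction_le a x
    have := ih hzw
    omega

theorem potential_le_potential_select_add {n k : ℕ} {y z : State} (h : z.1 ≤ y.1 + k) :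
    potential n y ≤ potential n (select n y z) + k := by
  unfold select potential
  split_ifs <;> omega

open ProbabilityTheory in
set_option linter.deprecated false in
theorem potential_le_tsum_stepMultiBit_add (n : ℕ) (y : State) :
    (potential n y : ℝ≥0∞) ≤ ∑' x, stepMultiBit n y x * potential n x + 2 := by
  rw [stepMultiBit, PMF.tsum_map_mul, mutateMulti, PMF.tsum_bind_mul,
    ← tsum_poissonPMF_one_mul_add_one, ← ENNReal.tsum_add]
  simp_rw [← mul_add]
  refine (poissonPMF 1).le_tsum_mul_of_forall_mem_support fun k _ => ?_
  rw [← (mutateIter (k + 1) y).tsum_mul_add_const]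
  refine (mutateIter (k + 1) y).le_tsum_mul_of_forall_mem_support fun z hz => ?_
  exact_mod_cast potential_le_potential_select_add (fst_le_of_mem_support_mutateIter hz)

section Survival

variable {n : ℕ} {step : State → PMF State} {μ0 : PMF State}

theorem tsum_alive_le_one (t : ℕ) : ∑' x, alive n step μ0 t x ≤ 1 := by
  induction t with
  | zero =>
    calc ∑' x, alive n step μ0 0 x ≤ ∑' x, μ0 x :=
          ENNReal.tsum_le_tsum fun x => by rw [alive]; split_ifs <;> simp
      _ = 1 := μ0.tsum_coe
  | succ t ih =>
    calc ∑' x, alive n step μ0 (t + 1) x ≤ ∑' x, ∑' y, alive n step μ0 t y * step y x :=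
          ENNReal.tsum_le_tsum fun x => by rw [alive]; split_ifs <;> simp
      _ = ∑' y, alive n step μ0 t y := by
          rw [ENNReal.tsum_comm]
          simp_rw [ENNReal.tsum_mul_left, PMF.tsum_coe, mul_one]
      _ ≤ 1 := ih

variable {φ : State → ℝ≥0∞}

theorem tsum_alive_zero_mul (hφ : ∀ x, fitness n x = 1 → φ x = 0) :
    ∑' x, alive n step μ0 0 x * φ x = ∑' x, μ0 x * φ x := by
  congr 1 with x
  rw [alive]
  split_ifs with h <;> simp [hφ x, h]

theorem tsum_alive_succ_mul (hφ : ∀ x, fitness n x = 1 → φ x = 0) (t : ℕ) :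
    ∑' x, alive n step μ0 (t + 1) x * φ x =
      ∑' y, alive n step μ0 t y * ∑' x, step y x * φ x := by
  have h : ∀ x, alive n step μ0 (t + 1) x * φ x = (∑' y, alive n step μ0 t y * step y x) * φ x :=
    fun x => by rw [alive]; split_ifs with h <;> simp [hφ x, h]
  simp_rw [h, ← ENNReal.tsum_mul_right, ← ENNReal.tsum_mul_left, mul_assoc]
  exact ENNReal.tsum_comm

theorem tsum_mul_le_tsum_alive_mul_add {δ : ℝ≥0∞} (hφ : ∀ x, fitness n x = 1 → φ x = 0)
    (hdrift : ∀ y, φ y ≤ ∑' x, step y x * φ x + δ) (t : ℕ) :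
    ∑' x, μ0 x * φ x ≤ ∑' x, alive n step μ0 t x * φ x + δ * t := by
  induction t with
  | zero => simp [tsum_alive_zero_mul hφ]
  | succ t ih =>
    have hstep : ∑' x, alive n step μ0 t x * φ x ≤ ∑' x, alive n step μ0 (t + 1) x * φ x + δ :=
      calc ∑' y, alive n step μ0 t y * φ y
          ≤ ∑' y, alive n step μ0 t y * (∑' x, step y x * φ x + δ) :=
            ENNReal.tsum_le_tsum fun y => by gcongr; exact hdrift y
        _ = ∑' x, alive n step μ0 (t + 1) x * φ x + (∑' y, alive n step μ0 t y) * δ := by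
            simp_rw [mul_add, ENNReal.tsum_add, ENNReal.tsum_mul_right, tsum_alive_succ_mul hφ]
        _ ≤ ∑' x, alive n step μ0 (t + 1) x * φ x + δ := by
            gcongr
            exact mul_le_of_le_one_left' (tsum_alive_le_one t)
    calc ∑' x, μ0 x * φ x ≤ ∑' x, alive n step μ0 t x * φ x + δ * t := ih
      _ ≤ ∑' x, alive n step μ0 (t + 1) x * φ x + δ + δ * t := by gcongr
      _ = ∑' x, alive n step μ0 (t + 1) x * φ x + δ * (t + 1 : ℕ) := by push_cast; ring

theorem inv_two_le_tsum_alive {δ M : ℝ≥0∞} (hφ : ∀ x, fitness n x = 1 → φ x = 0)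
    (hdrift : ∀ y, φ y ≤ ∑' x, step y x * φ x + δ) (hle : ∀ x, φ x ≤ M)
    (hinit : ∀ x ∈ μ0.support, M ≤ φ x) (hM : M ≠ 0) (hM' : M ≠ ⊤) {t : ℕ}
    (ht : 2 * (δ * t) ≤ M) : 2⁻¹ ≤ ∑' x, alive n step μ0 t x := by
  set mass := ∑' x, alive n step μ0 t x
  have hbound : M ≤ M * mass + δ * t :=
    calc M ≤ ∑' x, μ0 x * φ x := μ0.le_tsum_mul_of_forall_mem_support hinit
      _ ≤ ∑' x, alive n step μ0 t x * φ x + δ * t := tsum_mul_le_tsum_alive_mul_add hφ hdrift t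
      _ ≤ ∑' x, alive n step μ0 t x * M + δ * t := by gcongr with x; exact hle x
      _ = M * mass + δ * t := by rw [ENNReal.tsum_mul_right, mul_comm]
  have hhalf : M + M ≤ M * (2 * mass) + M :=
    calc M + M = 2 * M := (two_mul M).symm
      _ ≤ 2 * (M * mass + δ * t) := by gcongr
      _ ≤ M * (2 * mass) + M := by rw [mul_add, mul_left_comm]; gcongr
  have : M * 1 ≤ M * (2 * mass) := by
    rw [mul_one]; exact ENNReal.le_of_add_le_add_right hM' hhalf
  rw [ENNReal.inv_le_iff_le_mul (by simp) (by simp)]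
  exact (ENNReal.mul_le_mul_iff_right hM hM').mp this

theorem natCast_mul_inv_two_le_expectedRuntime {δ M : ℝ≥0∞}
    (hφ : ∀ x, fitness n x = 1 → φ x = 0) (hdrift : ∀ y, φ y ≤ ∑' x, step y x * φ x + δ)
    (hle : ∀ x, φ x ≤ M) (hinit : ∀ x ∈ μ0.support, M ≤ φ x) (hM : M ≠ 0) (hM' : M ≠ ⊤)
    {N : ℕ} (hN : 2 * (δ * N) ≤ M) : ((N + 1 : ℕ) : ℝ≥0∞) * 2⁻¹ ≤ expectedRuntime n step μ0 :=
  calc ((N + 1 : ℕ) : ℝ≥0∞) * 2⁻¹ = ∑ t ∈ Finset.range (N + 1), (2⁻¹ : ℝ≥0∞) := by simp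
    _ ≤ ∑ t ∈ Finset.range (N + 1), ∑' x, alive n step μ0 t x :=
        Finset.sum_le_sum fun t ht => inv_two_le_tsum_alive hφ hdrift hle hinit hM hM' <|
          le_trans (by gcongr; exact_mod_cast Finset.mem_range_succ_iff.mp ht) hN
    _ ≤ expectedRuntime n step μ0 := ENNReal.sum_le_tsum _

end Survival

/-- there exist constants `c > 0` and `n₀` such that for every
integer `n ≥ n₀` divisible by `4`, the (1+1)-ENAS algorithm with multi-bit mutation
and initial bound `s = n/4` has expected runtime at least `c·n` on the UNIFORM
problem (the paper's proof gives `E[T] ≥ n/5`). -/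
theorem multibit_lower_bound :
    ∃ c : ℝ, 0 < c ∧ ∃ n₀ : ℕ, ∀ n : ℕ, n₀ ≤ n → 4 ∣ n →
      ENNReal.ofReal (c * n) ≤
        expectedRuntime n (stepMultiBit n) (initDist (n / 4)) := by
  refine ⟨1 / 32, by norm_num, 1, fun n hn h4 => ?_⟩
  have hE := natCast_mul_inv_two_le_expectedRuntime (n := n) (N := n / 4 / 4) (δ := 2)
    (φ := fun x => (potential n x : ℝ≥0∞)) (μ0 := initDist (n / 4)) (M := (n / 4 : ℕ))
    (fun x hx => by simp [potential_eq_zero_of_fitness_eq_one hn h4 hx])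
    (potential_le_tsum_stepMultiBit_add n)
    (fun x => by exact_mod_cast min_le_left _ _)
    (fun x hx => by rw [potential_eq_of_mem_support_initDist hx])
    (by exact_mod_cast (by omega : n / 4 ≠ 0)) (ENNReal.natCast_ne_top _)
    (by exact_mod_cast (by omega : 2 * (2 * (n / 4 / 4)) ≤ n / 4))
  have hnN : (n : ℝ) ≤ 16 * (n / 4 / 4 + 1 : ℕ) := by exact_mod_cast (by omega : n ≤ _)
  refine le_trans ?_ hE
  rw [← ENNReal.ofReal_natCast, ← ENNReal.ofReal_ofNat 2, ← ENNReal.ofReal_inv_of_pos two_pos,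
    ← ENNReal.ofReal_mul (by positivity)]
  exact ENNReal.ofReal_le_ofReal (by linarith)

end ENAS
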